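/- arXiv:1904.03881 — 2 statements merged into one kernel-verified Lean document; each statement's English description precedes it below -/
import Mathlib

section
/- The linear map A_d (defined on the space of polynomials of degree at most d) is injective for every positive integer d. -/
open Polynomial

noncomputable def P : ℕ → Polynomial ℝ
  | 0 => 1
  | 1 => 1 + Polynomial.X
  | n + 2 => P (n + 1) + Polynomial.X * P n

/-- `Amon d k` is the value of the linear map `A_d` on the monomial `x^k`. -/
noncomputable def Amon : ℕ → ℕ → Polynomial ℝ
  | 0, 0 => 1 + 2 * Polynomial.X
  | 0, _ + 1 => 0
  | d + 1, k + 1 => Polynomial.X * Amon d k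
  | d + 1, 0 =>
      P (2 * d + 3) -
        ∑ k ∈ Finset.range (d + 1),
          Polynomial.C ((P (2 * d + 1)).coeff (k + 1)) * (Polynomial.X * Amon d k)

/-- The linear map `A_d` applied to a polynomial of degree at most `d`. -/
noncomputable def Aap (d : ℕ) (p : Polynomial ℝ) : Polynomial ℝ :=
  ∑ k ∈ Finset.range (d + 1), Polynomial.C (p.coeff k) * Amon d k

open Finset

/-!
Each `A_d(x^k)` is `x^k` times a polynomial with constant term `1`, so the matrix of `A_d`
in the monomial bases is lower unitriangular. Concretely, if `p ≠ 0` has trailing degree `k`,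
the coefficient of `x^k` in `A_d p` is the trailing coefficient of `p`, hence `A_d p ≠ 0`.
-/

theorem Polynomial.eq_zero_of_sum_C_coeff_mul_eq_zero {R : Type*} [Semiring R]
    (b : ℕ → R[X]) (d : ℕ) (hlow : ∀ k ≤ d, ∀ j < k, (b k).coeff j = 0)
    (hdiag : ∀ k ≤ d, (b k).coeff k = 1) {p : R[X]} (hp : p.natDegree ≤ d)
    (h : ∑ k ∈ range (d + 1), C (p.coeff k) * b k = 0) : p = 0 := by
  by_contra hp0
  set t := p.natTrailingDegree
  have ht : t ≤ d := p.natTrailingDegree_le_natDegree.trans hp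
  have hcoeff : (∑ k ∈ range (d + 1), C (p.coeff k) * b k).coeff t = p.trailingCoeff := by
    rw [finsetSum_coeff, sum_eq_single t]
    · rw [coeff_C_mul, hdiag t ht, mul_one, trailingCoeff]
    · intro j hj hjt
      rw [coeff_C_mul]
      rcases hjt.lt_or_gt with hlt | hgt
      · rw [coeff_eq_zero_of_lt_natTrailingDegree hlt, zero_mul]
      · rw [hlow j (Nat.lt_succ_iff.mp (mem_range.mp hj)) t hgt, mul_zero]
    · exact fun hnot => absurd (mem_range.mpr (Nat.lt_succ_of_le ht)) hnot
  exact trailingCoeff_nonzero_iff_nonzero.mpr hp0 (by rw [← hcoeff, h, coeff_zero])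

lemma P_coeff_zero : ∀ n, (P n).coeff 0 = 1
  | 0 => by simp [P]
  | 1 => by simp [P]
  | n + 2 => by
    rw [P, coeff_add, mul_coeff_zero]
    simp [P_coeff_zero (n + 1)]

lemma Amon_coeff_of_lt : ∀ d k j : ℕ, j < k → (Amon d k).coeff j = 0
  | 0, k + 1, _, _ => by simp [Amon]
  | d + 1, k + 1, 0, _ => by simp [Amon, mul_coeff_zero]
  | d + 1, k + 1, j + 1, h => by
    rw [Amon, coeff_X_mul]
    exact Amon_coeff_of_lt d k j (Nat.lt_of_succ_lt_succ h)

lemma Amon_coeff_zero_zero : ∀ d, (Amon d 0).coeff 0 = 1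
  | 0 => by simp [Amon]
  | d + 1 => by
    rw [Amon, coeff_sub, P_coeff_zero, finsetSum_coeff]
    simp [mul_coeff_zero]

lemma Amon_coeff_self : ∀ d k : ℕ, k ≤ d → (Amon d k).coeff k = 1
  | d, 0, _ => Amon_coeff_zero_zero d
  | d + 1, k + 1, h => by
    rw [Amon, coeff_X_mul]
    exact Amon_coeff_self d k (Nat.succ_le_succ_iff.mp h)

lemma Aap_sub (d : ℕ) (p q : ℝ[X]) : Aap d (p - q) = Aap d p - Aap d q := by
  simp only [Aap, coeff_sub, map_sub, sub_mul, sum_sub_distrib]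

theorem A_injective_general (d : ℕ) :
    ∀ p q : Polynomial ℝ, p.natDegree ≤ d → q.natDegree ≤ d →
      Aap d p = Aap d q → p = q := by
  intro p q hp hq hpq
  have hdeg : (p - q).natDegree ≤ d := (natDegree_sub_le p q).trans (max_le hp hq)
  have hA : Aap d (p - q) = 0 := by rw [Aap_sub, hpq, sub_self]
  exact sub_eq_zero.mp <| eq_zero_of_sum_C_coeff_mul_eq_zero (Amon d) d
    (fun k _ => Amon_coeff_of_lt d k) (Amon_coeff_self d) hdeg hA

theorem A_injective (d : ℕ) (hd : 1 ≤ d) :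
    ∀ p q : Polynomial ℝ, p.natDegree ≤ d → q.natDegree ≤ d →
      Aap d p = Aap d q → p = q :=
  A_injective_general d
end

section
/- There is no polynomial q of degree at most d+1 with q(x) = A_d(p) for some polynomial p of degree at most d such that A_d(p) = x^{d+1} + x^d. That is, x^{d+1} + x^d is not in the image of A_d for d ≥ 1. -/
/-! The functional `ψ_j(q) = [x^j] G(x) q(x)`, with `G = ∑ₘ (-1)ᵐ Cat(m+1) xᵐ = c(-x)²` for the
Catalan series `c`, vanishes on the image of `A_d` when `j = d + 1`, while
`ψ_{d+1}(x^{d+1} + x^d) = Cat 1 - Cat 2 = -1`.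

Since `ψ_{j+1}(x q) = ψ_j(q)`, the values `ψ_j(P_n)` obey Pascal's rule along
`P_{n+2} = P_{n+1} + x P_n`, which gives `ψ_j(P_n) = (-1)^j (C(m, j+1) - C(m, j+2))` with
`m = 2j + 1 - n` for `n ≤ 2j`; at `n = 2j - 1` this vanishes once `j ≥ 2`, which is what is needed for
`A_d(1)`, the case `A_d(x^{k+1}) = x A_{d-1}(x^k)` being the shift property again. -/

open Polynomial

def ballot (m k : ℕ) : ℤ := m.choose k - m.choose (k + 1)

theorem ballot_succ_succ (m k : ℕ) : ballot (m + 1) (k + 1) = ballot m k + ballot m (k + 1) := by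
  simp only [ballot, Nat.choose_succ_succ]
  push_cast
  ring

theorem ballot_two_mul_self (n : ℕ) : ballot (2 * n) n = catalan n := by
  have hcat := succ_mul_catalan_eq_centralBinom n
  have hsucc := Nat.choose_succ_right_eq (2 * n) n
  rw [Nat.centralBinom_eq_two_mul_choose] at hcat
  rw [show 2 * n - n = n by omega] at hsucc
  apply mul_left_cancel₀ (show ((n : ℤ) + 1) ≠ 0 by positivity)
  simp only [ballot]
  zify at hcat hsucc
  linear_combination -hcat - hsucc

theorem ballot_two_mul_add_one (n : ℕ) : ballot (2 * n + 1) (n + 1) = catalan (n + 1) := by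
  have hzero : ballot (2 * n + 1) n = 0 := by
    simp [ballot, Nat.choose_symm_half]
  have := ballot_succ_succ (2 * n + 1) n
  rw [hzero, zero_add, show 2 * n + 1 + 1 = 2 * (n + 1) by ring, ballot_two_mul_self] at this
  exact this.symm

noncomputable def altCatalanSeries : PowerSeries ℝ :=
  PowerSeries.mk fun m => (-1) ^ m * catalan (m + 1)

noncomputable def catalanFunctional (j : ℕ) : ℝ[X] →ₗ[ℝ] ℝ where
  toFun q := PowerSeries.coeff j (altCatalanSeries * q)
  map_add' p q := by simp [mul_add]
  map_smul' c q := by simp [Polynomial.smul_eq_C_mul, mul_left_comm _ (PowerSeries.C c)]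

theorem catalanFunctional_one (j : ℕ) :
    catalanFunctional j 1 = (-1) ^ j * catalan (j + 1) := by
  simp [catalanFunctional, altCatalanSeries]

theorem catalanFunctional_X_pow_mul (i j : ℕ) (q : ℝ[X]) :
    catalanFunctional (j + i) (X ^ i * q) = catalanFunctional j q := by
  simp [catalanFunctional, mul_left_comm _ (PowerSeries.X ^ i)]

theorem catalanFunctional_X_pow (i j : ℕ) :
    catalanFunctional (j + i) (X ^ i) = (-1) ^ j * catalan (j + 1) := by
  rw [← mul_one (X ^ i), catalanFunctional_X_pow_mul, catalanFunctional_one]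

theorem catalanFunctional_X_mul (j : ℕ) (q : ℝ[X]) :
    catalanFunctional (j + 1) (X * q) = catalanFunctional j q := by
  simpa using catalanFunctional_X_pow_mul 1 j q

theorem catalanFunctional_P {j n : ℕ} (h : n ≤ 2 * j) :
    catalanFunctional j (P n) = (-1) ^ j * ballot (2 * j + 1 - n) (j + 1) := by
  induction j generalizing n with
  | zero =>
    obtain rfl : n = 0 := by omega
    simp [P, catalanFunctional_one, ballot]
  | succ j ih =>
    induction n using Nat.twoStepInduction with
    | zero =>
      rw [P, catalanFunctional_one, Nat.sub_zero, ballot_two_mul_add_one]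
      push_cast
      ring
    | one =>
      have hpascal := ballot_succ_succ (2 * (j + 1)) (j + 1)
      rw [ballot_two_mul_add_one, ballot_two_mul_self] at hpascal
      rw [P, map_add, ← mul_one X, catalanFunctional_X_mul, catalanFunctional_one,
        catalanFunctional_one, Nat.add_sub_cancel]
      rw [eq_sub_of_add_eq' hpascal.symm]
      push_cast
      ring
    | more n _ ihn =>
      obtain ⟨m, hm⟩ : ∃ m, 2 * j + 1 - n = m := ⟨_, rfl⟩
      have hpascal := ballot_succ_succ m (j + 1)
      rw [P, map_add, catalanFunctional_X_mul, ihn (by omega), ih (by omega),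
        show 2 * (j + 1) + 1 - (n + 1) = m + 1 by omega,
        show 2 * (j + 1) + 1 - (n + 2) = m by omega, hm, hpascal]
      push_cast
      ring

theorem catalanFunctional_P_two_mul_add_three (d : ℕ) :
    catalanFunctional (d + 2) (P (2 * d + 3)) = 0 := by
  rw [catalanFunctional_P (by omega), show 2 * (d + 2) + 1 - (2 * d + 3) = 2 by omega]
  simp [ballot, Nat.choose_eq_zero_of_lt]

theorem catalanFunctional_Amon (d k : ℕ) : catalanFunctional (d + 1) (Amon d k) = 0 := by
  induction d generalizing k with
  | zero =>
    cases k with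
    | zero =>
      rw [Amon, map_add, show (2 : ℝ[X]) * X = (2 : ℝ) • (X * 1) by
          rw [smul_eq_C_mul, mul_one, C_ofNat],
        map_smul, catalanFunctional_X_mul, catalanFunctional_one, catalanFunctional_one]
      norm_num [catalan_two]
    | succ k => simp [Amon]
  | succ d ih =>
    cases k with
    | zero =>
      simp only [Amon, map_sub, map_sum, ← Polynomial.smul_eq_C_mul, map_smul,
        catalanFunctional_X_mul, ih, smul_zero, Finset.sum_const_zero, sub_zero]
      exact catalanFunctional_P_two_mul_add_three d
    | succ k => rw [Amon, catalanFunctional_X_mul, ih]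

theorem catalanFunctional_Aap (d : ℕ) (p : ℝ[X]) : catalanFunctional (d + 1) (Aap d p) = 0 := by
  simp [Aap, ← Polynomial.smul_eq_C_mul, catalanFunctional_Amon]

theorem not_in_image_A_general (d : ℕ) :
    ¬ ∃ p : Polynomial ℝ, p.natDegree ≤ d ∧
      Aap d p = Polynomial.X ^ (d + 1) + Polynomial.X ^ d := by
  rintro ⟨p, -, hp⟩
  have hvalue : catalanFunctional (d + 1) (X ^ (d + 1) + X ^ d) = -1 := by
    have hlead := catalanFunctional_X_pow (d + 1) 0
    have hnext := catalanFunctional_X_pow d 1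
    rw [zero_add] at hlead
    rw [add_comm] at hnext
    rw [map_add, hlead, hnext]
    norm_num [catalan_two]
  have := catalanFunctional_Aap d p
  rw [hp, hvalue] at this
  norm_num at this

theorem not_in_image_A (d : ℕ) (hd : 1 ≤ d) :
    ¬ ∃ p : Polynomial ℝ, p.natDegree ≤ d ∧
      Aap d p = Polynomial.X ^ (d + 1) + Polynomial.X ^ d :=
  not_in_image_A_general d
end
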